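/- For the polar transform G_N = F^{⊗n} over GF(2), the entry (G_N)_{i,j} equals 1 if and only if the binary expansion of j is componentwise dominated by the binary expansion of i (i.e., every bit set in j is also set in i). -/

import Mathlib

/-- The polar kernel `F = [[1,0],[1,1]]` over GF(2). -/
def polarF : Matrix (Fin 2) (Fin 2) (ZMod 2) := !![1, 0; 1, 1]

/-- Index equivalence `Fin 2 × Fin (2^n) ≃ Fin (2^(n+1))`, sending `(a, b)` to
`b + 2^n * a` (so `a` is the top bit). -/
def polarIdx (n : ℕ) : Fin 2 × Fin (2 ^ n) ≃ Fin (2 ^ (n + 1)) :=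
  finProdFinEquiv.trans (finCongr (by rw [pow_succ, mul_comm]))

/-- The polar transform `G_N = F^{⊗n}` as an `N × N` matrix over GF(2), `N = 2^n`. -/
def polarG : (n : ℕ) → Matrix (Fin (2 ^ n)) (Fin (2 ^ n)) (ZMod 2)
  | 0 => 1
  | n + 1 =>
    Matrix.reindex (polarIdx n) (polarIdx n)
      (Matrix.kroneckerMap (· * ·) polarF (polarG n))

/-!
Induction on `n`, writing an index of `G_{2N}` as `2^n * a + b` with top bit `a`. By the Kronecker
recursion the entry at `(2^n * a + b, 2^n * c + d)` is `F a c * G_N b d`; over GF(2) a product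
is `1` iff both factors are, `F a c = 1` is domination of the top bits, and domination of
`2^n * a + b` splits likewise into domination of top bits and of low parts.
-/

lemma Nat.testBit_imp_two_pow_mul_add_iff {n a b c d : ℕ} (hb : b < 2 ^ n) (hd : d < 2 ^ n) :
    (∀ k, (2 ^ n * c + d).testBit k = true → (2 ^ n * a + b).testBit k = true) ↔
      (∀ k, c.testBit k = true → a.testBit k = true) ∧
        ∀ k, d.testBit k = true → b.testBit k = true := by
  simp only [Nat.testBit_two_pow_mul_add _ hb, Nat.testBit_two_pow_mul_add _ hd]
  constructor
  · intro h
    refine ⟨fun k hk => ?_, fun k hk => ?_⟩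
    · simpa using h (k + n) (by simpa using hk)
    · have hkn : k < n := by
        by_contra! hnk
        rw [Nat.testBit_eq_false_of_lt (hd.trans_le (Nat.pow_le_pow_right two_pos hnk))] at hk
        exact Bool.false_ne_true hk
      simpa [hkn] using h k (by simpa [hkn] using hk)
  · rintro ⟨hhigh, hlow⟩ k
    split_ifs
    exacts [hlow k, hhigh (k - n)]

lemma polarIdx_val (n : ℕ) (a : Fin 2) (b : Fin (2 ^ n)) :
    ((polarIdx n (a, b) : Fin (2 ^ (n + 1))) : ℕ) = 2 ^ n * a + b := by
  simp [polarIdx, finProdFinEquiv]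
  ring

lemma polarG_succ_polarIdx_apply (n : ℕ) (a c : Fin 2) (b d : Fin (2 ^ n)) :
    polarG (n + 1) (polarIdx n (a, b)) (polarIdx n (c, d)) = polarF a c * polarG n b d := by
  simp [polarG]

lemma polarF_eq_one_iff (a c : Fin 2) :
    polarF a c = 1 ↔ ∀ k, (c : ℕ).testBit k = true → (a : ℕ).testBit k = true := by
  fin_cases a <;> fin_cases c <;> simp [polarF]
  exact ⟨0, rfl⟩

/-- `(G_N)_{i,j} = 1` iff the binary expansion of `j` is componentwise dominated by
that of `i`. -/
theorem polarG_entry_iff_bit_domination (n : ℕ) (i j : Fin (2 ^ n)) :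
    polarG n i j = 1 ↔ ∀ k : ℕ, (j : ℕ).testBit k = true → (i : ℕ).testBit k = true := by
  induction n with
  | zero => simp [polarG, Matrix.one_apply, Fin.ext_iff]
  | succ n ih =>
    obtain ⟨⟨a, b⟩, rfl⟩ := (polarIdx n).surjective i
    obtain ⟨⟨c, d⟩, rfl⟩ := (polarIdx n).surjective j
    rw [polarG_succ_polarIdx_apply, mul_eq_one, polarF_eq_one_iff, ih, polarIdx_val,
      polarIdx_val, Nat.testBit_imp_two_pow_mul_add_iff b.isLt d.isLt]
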